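/- arXiv:1511.00544 — 4 statements merged into one kernel-verified Lean document; each statement's English description precedes it below -/
import Mathlib

section
/- Define K_DB(w) = ξ + G⁻¹((w−c)/w) and K_WSD(w) = ξ + G⁻¹((s−w)/s), for c < w < s. Then with w* = √(s·c): if w < w* then K_WSD(w) > K_DB(w); if w > w* then K_DB(w) > K_WSD(w); and if w = w* then K_DB(w) = K_WSD(w). -/
open Set

/-! Both reservation levels apply the increasing map `G⁻¹` to a critical ratio, so they compare
as the ratios do: `(w - c)/w = 1 - c/w` and `(s - w)/s = 1 - w/s`, and `w/s < c/w` exactly when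
`w² < s c`, i.e. when `w < √(s c)`. -/

lemma sub_div_self_mem_Icc {a b : ℝ} (ha : 0 < a) (hb : 0 ≤ b) (hba : b ≤ a) :
    (a - b) / a ∈ Icc (0 : ℝ) 1 :=
  ⟨div_nonneg (sub_nonneg.2 hba) ha.le, (div_le_one ha).2 (sub_le_self a hb)⟩

section CriticalRatio

variable {c w s : ℝ}

lemma sub_div_lt_sub_div_iff_lt_sqrt (hw : 0 < w) (hs : 0 < s) :
    (w - c) / w < (s - w) / s ↔ w < Real.sqrt (s * c) := by
  rw [div_lt_div_iff₀ hw hs, Real.lt_sqrt hw.le]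
  constructor <;> intro h <;> nlinarith

lemma sub_div_lt_sub_div_iff_sqrt_lt (hw : 0 < w) (hs : 0 < s) :
    (s - w) / s < (w - c) / w ↔ Real.sqrt (s * c) < w := by
  rw [div_lt_div_iff₀ hs hw, Real.sqrt_lt' hw]
  constructor <;> intro h <;> nlinarith

lemma sub_div_eq_sub_div_of_eq_sqrt (hw : 0 < w) (hs : 0 < s) (h : w = Real.sqrt (s * c)) :
    (w - c) / w = (s - w) / s :=
  le_antisymm
    (not_lt.1 fun hlt => h.not_gt ((sub_div_lt_sub_div_iff_sqrt_lt hw hs).1 hlt))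
    (not_lt.1 fun hlt => h.not_lt ((sub_div_lt_sub_div_iff_lt_sqrt hw hs).1 hlt))

end CriticalRatio

theorem stmt2_general
    (c w s ξ : ℝ) (Ginv : ℝ → ℝ)
    (hc : 0 < c) (hcw : c < w) (hws : w < s)
    (hGinv : StrictMonoOn Ginv (Icc 0 1)) :
    (w < Real.sqrt (s * c) → ξ + Ginv ((w - c) / w) < ξ + Ginv ((s - w) / s)) ∧
    (Real.sqrt (s * c) < w → ξ + Ginv ((s - w) / s) < ξ + Ginv ((w - c) / w)) ∧
    (w = Real.sqrt (s * c) → ξ + Ginv ((w - c) / w) = ξ + Ginv ((s - w) / s)) := by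
  have hw : 0 < w := hc.trans hcw
  have hs : 0 < s := hw.trans hws
  have hDB := sub_div_self_mem_Icc hw hc.le hcw.le
  have hWSD := sub_div_self_mem_Icc hs hw.le hws.le
  refine ⟨fun h => ?_, fun h => ?_, fun h => ?_⟩
  · gcongr
    exact hGinv hDB hWSD ((sub_div_lt_sub_div_iff_lt_sqrt hw hs).2 h)
  · gcongr
    exact hGinv hWSD hDB ((sub_div_lt_sub_div_iff_sqrt_lt hw hs).2 h)
  · rw [sub_div_eq_sub_div_of_eq_sqrt hw hs h]

/-- Comparison of the decentralized reservations K_DB(w) = ξ + G⁻¹((w−c)/w) and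
K_WSD(w) = ξ + G⁻¹((s−w)/s) around the critical wholesale price w* = √(s·c). -/
theorem stmt2
    (c w s ξ : ℝ) (Ginv : ℝ → ℝ)
    (hc : 0 < c) (hcw : c < w) (hws : w < s) (hξ : 0 ≤ ξ)
    (hGinv : StrictMonoOn Ginv (Icc 0 1)) :
    (w < Real.sqrt (s * c) → ξ + Ginv ((w - c) / w) < ξ + Ginv ((s - w) / s)) ∧
    (Real.sqrt (s * c) < w → ξ + Ginv ((s - w) / s) < ξ + Ginv ((w - c) / w)) ∧
    (w = Real.sqrt (s * c) → ξ + Ginv ((w - c) / w) = ξ + Ginv ((s - w) / s)) :=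
  stmt2_general c w s ξ Ginv hc hcw hws hGinv
end

section
/- Sufficiency of IC: suppose k(ξ) is nondecreasing in ξ with k(ξ) ≥ ξ, and p(ξ) is chosen so that the indirect profit satisfies Π(ξ) = Π(ξ̲) + ∫_{ξ̲}^{ξ} [(r−s) + (s−w)·G(k(x)−x)] dx. Then for all ξ, ξ': U(k(ξ), p(ξ), ξ) ≥ U(k(ξ'), p(ξ'), ξ), i.e., the contract is incentive compatible. -/
open MeasureTheory Set Filter

/-!
For a fixed contract `(κ, ρ)` the payoff of type `ξ` is an integral in `ξ` of the slope
`(r - s) + (s - w) G (κ - ξ)` below the capacity `κ` and `0` above it. So both the deviation gain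
`U (k ξ') (p ξ') ξ - Π ξ'` and the envelope increment `Π ξ - Π ξ'` are integrals over `[ξ', ξ]`.
As `k` is nondecreasing with `k x ≥ x`, the envelope slope `(r - s) + (s - w) G (k x - x)`
dominates the deviation slope to the right of `ξ'` and is dominated by it to the left, which is
the sign needed in either orientation.
-/

noncomputable section

def marginalProfit (r s w : ℝ) (G : ℝ → ℝ) (u : ℝ) : ℝ :=
  (r - s) + (s - w) * G u

def grossPayoff (r s w : ℝ) (G : ℝ → ℝ) (κ ξ : ℝ) : ℝ :=
  (r - w) * min κ ξ + (s - w) * ∫ u in (0:ℝ)..(max (κ - ξ) 0), (1 - G u)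

def payoffSlope (r s w : ℝ) (G : ℝ → ℝ) (κ x : ℝ) : ℝ :=
  if x ≤ κ then marginalProfit r s w G (κ - x) else 0

end

theorem integral_le_integral_of_oriented {f g : ℝ → ℝ} {a b : ℝ}
    (hf : IntervalIntegrable f volume a b) (hg : IntervalIntegrable g volume a b)
    (hab : a ≤ b → ∀ x ∈ Icc a b, f x ≤ g x) (hba : b ≤ a → ∀ x ∈ Icc b a, g x ≤ f x) :
    ∫ x in a..b, f x ≤ ∫ x in a..b, g x := by
  rcases le_total a b with h | h
  · exact intervalIntegral.integral_mono_on h hf hg (hab h)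
  · rw [intervalIntegral.integral_symm b a, intervalIntegral.integral_symm b a, neg_le_neg_iff]
    exact intervalIntegral.integral_mono_on h hg.symm hf.symm (hba h)

theorem sub_eq_integral_of_eq_add_integral {P f : ℝ → ℝ} {a b : ℝ}
    (hf : IntegrableOn f (Icc a b)) (hP : ∀ ξ ∈ Icc a b, P ξ = P a + ∫ x in a..ξ, f x)
    {ξ ξ' : ℝ} (hξ : ξ ∈ Icc a b) (hξ' : ξ' ∈ Icc a b) :
    P ξ - P ξ' = ∫ x in ξ'..ξ, f x := by
  have ha : a ∈ Icc a b := left_mem_Icc.2 (hξ.1.trans hξ.2)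
  rw [hP ξ hξ, hP ξ' hξ', ← intervalIntegral.integral_interval_sub_left
    (hf.mono_set (uIcc_subset_Icc ha hξ)).intervalIntegrable
    (hf.mono_set (uIcc_subset_Icc ha hξ')).intervalIntegrable]
  ring

theorem integrableOn_monotone_comp_sub_self {G k : ℝ → ℝ} {a b : ℝ} (hG : Monotone G)
    (hk : MonotoneOn k (Icc a b)) : IntegrableOn (fun x => G (k x - x)) (Icc a b) := by
  have hmeas : AEStronglyMeasurable (fun x => G (k x - x)) (volume.restrict (Icc a b)) :=
    (hG.measurable.comp_aemeasurable
      ((aemeasurable_restrict_of_monotoneOn measurableSet_Icc hk).sub aemeasurable_id)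
      ).aestronglyMeasurable
  refine integrable_of_le_of_le (g₁ := fun _ => G (k a - b)) (g₂ := fun _ => G (k b - a)) hmeas
    ?_ ?_ (integrableOn_const measure_Icc_lt_top.ne) (integrableOn_const measure_Icc_lt_top.ne)
  all_goals
    refine ae_restrict_of_forall_mem measurableSet_Icc fun x hx => hG ?_
    have hab : a ≤ b := hx.1.trans hx.2
  · linarith [hk (left_mem_Icc.2 hab) hx hx.1, hx.2]
  · linarith [hk hx (right_mem_Icc.2 hab) hx.2, hx.1]

section

variable {r s w : ℝ} {G : ℝ → ℝ}

theorem marginalProfit_mono (hsw : w ≤ s) (hG : Monotone G) :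
    Monotone (marginalProfit r s w G) := fun u v huv => by
  have := mul_le_mul_of_nonneg_left (hG huv) (sub_nonneg.2 hsw)
  simp only [marginalProfit]
  linarith

theorem marginalProfit_nonneg (hrs : s ≤ r) (hsw : w ≤ s) (hG : Monotone G) (hG0 : G 0 = 0)
    {u : ℝ} (hu : 0 ≤ u) : 0 ≤ marginalProfit r s w G u := by
  have := marginalProfit_mono (r := r) hsw hG hu
  simp only [marginalProfit, hG0] at this ⊢
  linarith

theorem payoffSlope_antitone (hrs : s ≤ r) (hsw : w ≤ s) (hG : Monotone G) (hG0 : G 0 = 0)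
    (κ : ℝ) : Antitone (payoffSlope r s w G κ) := by
  intro x y hxy
  simp only [payoffSlope]
  split_ifs with hy hx hx
  · exact marginalProfit_mono hsw hG (by linarith)
  · exact absurd (hxy.trans hy) hx
  · exact marginalProfit_nonneg hrs hsw hG hG0 (sub_nonneg.2 hx)
  · exact le_rfl

theorem grossPayoff_eq_sub_integral (hG : Monotone G) (κ ξ : ℝ) :
    grossPayoff r s w G κ ξ = (r - w) * κ - ∫ x in ξ..κ, payoffSlope r s w G κ x := by
  rcases le_total ξ κ with h | h
  · have hslope : ∫ x in ξ..κ, payoffSlope r s w G κ x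
        = ∫ x in ξ..κ, marginalProfit r s w G (κ - x) :=
      intervalIntegral.integral_congr fun x hx => if_pos (by rw [uIcc_of_le h] at hx; exact hx.2)
    have hGint : IntervalIntegrable G volume 0 (κ - ξ) := hG.intervalIntegrable
    rw [hslope, intervalIntegral.integral_comp_sub_left (marginalProfit r s w G), sub_self]
    simp only [grossPayoff, marginalProfit, max_eq_left (sub_nonneg.2 h), min_eq_right h]
    rw [intervalIntegral.integral_add intervalIntegrable_const (hGint.const_mul _),
      intervalIntegral.integral_sub intervalIntegrable_const hGint,
      intervalIntegral.integral_const_mul]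
    simp only [intervalIntegral.integral_const, smul_eq_mul]
    ring
  · have hslope : ∫ x in ξ..κ, payoffSlope r s w G κ x = ∫ _ in ξ..κ, (0:ℝ) :=
      intervalIntegral.integral_congr_ae <| ae_of_all _ fun x hx =>
        if_neg (by rw [uIoc_of_ge h] at hx; exact not_le.2 hx.1)
    simp only [hslope, grossPayoff, max_eq_right (sub_nonpos.2 h), min_eq_left h,
      intervalIntegral.integral_same, intervalIntegral.integral_zero]
    ring

theorem grossPayoff_sub_grossPayoff (hrs : s ≤ r) (hsw : w ≤ s) (hG : Monotone G)
    (hG0 : G 0 = 0) (κ ξ ξ' : ℝ) :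
    grossPayoff r s w G κ ξ - grossPayoff r s w G κ ξ'
      = ∫ x in ξ'..ξ, payoffSlope r s w G κ x := by
  have hint : ∀ a b, IntervalIntegrable (payoffSlope r s w G κ) volume a b := fun _ _ =>
    (payoffSlope_antitone hrs hsw hG hG0 κ).intervalIntegrable
  rw [grossPayoff_eq_sub_integral hG, grossPayoff_eq_sub_integral hG,
    ← intervalIntegral.integral_add_adjacent_intervals (hint ξ' ξ) (hint ξ κ)]
  ring

theorem payoffSlope_le_marginalProfit (hrs : s ≤ r) (hsw : w ≤ s) (hG : Monotone G)
    (hG0 : G 0 = 0) {κ κ' x : ℝ} (hκ : κ ≤ κ') (hx : x ≤ κ') :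
    payoffSlope r s w G κ x ≤ marginalProfit r s w G (κ' - x) := by
  simp only [payoffSlope]
  split_ifs
  · exact marginalProfit_mono hsw hG (by linarith)
  · exact marginalProfit_nonneg hrs hsw hG hG0 (sub_nonneg.2 hx)

theorem marginalProfit_le_payoffSlope (hsw : w ≤ s) (hG : Monotone G) {κ κ' x : ℝ}
    (hκ : κ' ≤ κ) (hx : x ≤ κ) :
    marginalProfit r s w G (κ' - x) ≤ payoffSlope r s w G κ x := by
  rw [payoffSlope, if_pos hx]
  exact marginalProfit_mono hsw hG (by linarith)

end

theorem stmt11_general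
    (r s w ξlo ξhi : ℝ) (G : ℝ → ℝ) (U : ℝ → ℝ → ℝ → ℝ) (k p Pi : ℝ → ℝ)
    (hws : w < s) (hsr : s < r)
    (hGmono : Monotone G) (hG0 : G 0 = 0)
    (hU : ∀ κ ρ ξ, U κ ρ ξ =
      (r - w) * min κ ξ + (s - w) * (∫ u in (0:ℝ)..(max (κ - ξ) 0), (1 - G u)) - ρ)
    (hkmono : MonotoneOn k (Icc ξlo ξhi))
    (hk : ∀ ξ ∈ Icc ξlo ξhi, ξ ≤ k ξ)
    (hPi : ∀ ξ, Pi ξ = U (k ξ) (p ξ) ξ)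
    (hP : ∀ ξ ∈ Icc ξlo ξhi,
      Pi ξ = Pi ξlo + ∫ x in ξlo..ξ, ((r - s) + (s - w) * G (k x - x))) :
    ∀ ξ ∈ Icc ξlo ξhi, ∀ ξ' ∈ Icc ξlo ξhi, U (k ξ') (p ξ') ξ ≤ U (k ξ) (p ξ) ξ := by
  intro ξ hξ ξ' hξ'
  have hf : IntegrableOn (fun x => marginalProfit r s w G (k x - x)) (Icc ξlo ξhi) :=
    (integrableOn_const measure_Icc_lt_top.ne).add
      ((integrableOn_monotone_comp_sub_self hGmono hkmono).const_mul (s - w))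
  have hPi_sub : Pi ξ - Pi ξ' = ∫ x in ξ'..ξ, marginalProfit r s w G (k x - x) :=
    sub_eq_integral_of_eq_add_integral hf hP hξ hξ'
  have hU_sub : U (k ξ') (p ξ') ξ - Pi ξ'
      = ∫ x in ξ'..ξ, payoffSlope r s w G (k ξ') x := by
    rw [← grossPayoff_sub_grossPayoff hsr.le hws.le hGmono hG0, hPi ξ', hU, hU, grossPayoff,
      grossPayoff]
    ring
  have hmem : ∀ {a b}, a ∈ Icc ξlo ξhi → b ∈ Icc ξlo ξhi → ∀ x ∈ Icc a b, x ∈ Icc ξlo ξhi :=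
    fun ha hb x hx => ⟨ha.1.trans hx.1, hx.2.trans hb.2⟩
  have hcross : ∫ x in ξ'..ξ, payoffSlope r s w G (k ξ') x
      ≤ ∫ x in ξ'..ξ, marginalProfit r s w G (k x - x) :=
    integral_le_integral_of_oriented
      (payoffSlope_antitone hsr.le hws.le hGmono hG0 _).intervalIntegrable
      (hf.mono_set (uIcc_subset_Icc hξ' hξ)).intervalIntegrable
      (fun _ x hx => payoffSlope_le_marginalProfit hsr.le hws.le hGmono hG0
        (hkmono hξ' (hmem hξ' hξ x hx) hx.1) (hk x (hmem hξ' hξ x hx)))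
      (fun _ x hx => marginalProfit_le_payoffSlope hws.le hGmono
        (hkmono (hmem hξ hξ' x hx) hξ' hx.2) (hx.2.trans (hk ξ' hξ')))
  rw [← hPi ξ]
  linarith

/-- Sufficiency: if k(·) is nondecreasing with k(ξ) ≥ ξ and the payments implement the
envelope profit formula, then the contract is incentive compatible. -/
theorem stmt11
    (r s w ξlo ξhi : ℝ) (G : ℝ → ℝ) (U : ℝ → ℝ → ℝ → ℝ) (k p Pi : ℝ → ℝ)
    (hw : 0 < w) (hws : w < s) (hsr : s < r) (hlo : 0 ≤ ξlo) (hlohi : ξlo ≤ ξhi)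
    (hGcont : Continuous G) (hGmono : Monotone G) (hG0 : G 0 = 0)
    (hU : ∀ κ ρ ξ, U κ ρ ξ =
      (r - w) * min κ ξ + (s - w) * (∫ u in (0:ℝ)..(max (κ - ξ) 0), (1 - G u)) - ρ)
    (hkmono : MonotoneOn k (Icc ξlo ξhi))
    (hk : ∀ ξ ∈ Icc ξlo ξhi, ξ ≤ k ξ)
    (hPi : ∀ ξ, Pi ξ = U (k ξ) (p ξ) ξ)
    (hP : ∀ ξ ∈ Icc ξlo ξhi,
      Pi ξ = Pi ξlo + ∫ x in ξlo..ξ, ((r - s) + (s - w) * G (k x - x))) :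
    ∀ ξ ∈ Icc ξlo ξhi, ∀ ξ' ∈ Icc ξlo ξhi, U (k ξ') (p ξ') ξ ≤ U (k ξ) (p ξ) ξ :=
  stmt11_general r s w ξlo ξhi G U k p Pi hws hsr hGmono hG0 hU hkmono hk hPi hP
end

section
/- Let the optimal reservation levels under the two contracts be defined implicitly by: s·(1−G(K_I−ξ)) − c − h(ξ)·(s−w)·g(K_I−ξ) = 0 and s·(1−G(K_II−ξ)) − c − h(ξ)·s·g(K_II−ξ) = 0, where h(ξ) = (1−F(ξ))/f(ξ) ≥ 0, and the centralized optimum K_c = ξ + G⁻¹((s−c)/s). Then K_II(ξ) ≤ K_I(ξ) ≤ K_c(ξ) for all ξ ∈ [ξ̲, ξ̄], with equalities when ξ = ξ̄ (where h(ξ̄) = 0). -/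
open MeasureTheory Set Filter Topology

/-!
Write `t = K - ξ` for the reservation margin. All three first-order conditions are
`s (1 - G t) - c - a g t = 0`, with virtual-cost coefficient `a` equal to `h(ξ) s`, `h(ξ) (s - w)`
and `0` respectively. The residual is a derivative (of `(s - c) t - s ∫₀ᵗ G - a G t`), so it has
the intermediate value property although `g` need not be continuous; it is eventually negative.
Lowering `a` makes the residual nonnegative at the root for the larger `a`, so the unique root for
the smaller `a` lies further out. At the centralized end `a = 0` the root is `G⁻¹((s - c)/s)`, and
any root with `a ≥ 0` has `G t ≤ (s - c)/s`, hence lies below it.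
-/

theorem exists_ge_eq_zero_of_hasDerivAt {Φ φ : ℝ → ℝ} {x₀ : ℝ}
    (hΦ : ∀ x, x₀ ≤ x → HasDerivAt Φ (φ x) x) (h₀ : 0 ≤ φ x₀)
    (hneg : ∀ᶠ x in atTop, φ x < 0) : ∃ x, x₀ ≤ x ∧ φ x = 0 := by
  obtain ⟨M, hM, hφM⟩ := ((eventually_ge_atTop x₀).and hneg).exists
  obtain ⟨x, hx, hφx⟩ := (ordConnected_Icc.image_hasDerivWithinAt
    fun x hx => (hΦ x hx.1).hasDerivWithinAt).out (mem_image_of_mem φ (right_mem_Icc.2 hM))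
    (mem_image_of_mem φ (left_mem_Icc.2 hM)) ⟨hφM.le, h₀⟩
  exact ⟨x, hx.1, hφx⟩

def focResidual (s c a : ℝ) (G g : ℝ → ℝ) (t : ℝ) : ℝ :=
  s * (1 - G t) - c - a * g t

section FocResidual

variable {s c a : ℝ} {G g : ℝ → ℝ}

theorem hasDerivAt_focResidual_primitive (hG : Continuous G) {t : ℝ} (hgt : HasDerivAt G (g t) t) :
    HasDerivAt (fun u => (s - c) * u - s * (∫ v in (0 : ℝ)..u, G v) - a * G u)
      (focResidual s c a G g t) t := by
  have hint : HasDerivAt (fun u => ∫ v in (0 : ℝ)..u, G v) (G t) t :=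
    intervalIntegral.integral_hasDerivAt_right (hG.intervalIntegrable _ _)
      (hG.stronglyMeasurableAtFilter _ _) hG.continuousAt
  refine (((hasDerivAt_id' t).const_mul (s - c)).sub (hint.const_mul s)).sub
    (hgt.const_mul a) |>.congr_deriv ?_
  unfold focResidual
  ring

theorem focResidual_eventually_neg (hc : 0 < c) (ha : 0 ≤ a)
    (hGlim : Tendsto G atTop (𝓝 1)) (hg : ∀ t, 0 < t → 0 ≤ g t) :
    ∀ᶠ t in atTop, focResidual s c a G g t < 0 := by
  have hlim : Tendsto (fun t => s * (1 - G t) - c) atTop (𝓝 (-c)) := by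
    simpa using ((hGlim.const_sub 1).const_mul s).sub_const c
  filter_upwards [hlim.eventually (gt_mem_nhds (neg_lt_zero.2 hc)), eventually_gt_atTop 0]
    with t hlt ht
  have := mul_nonneg ha (hg t ht)
  simp only [focResidual]
  linarith

theorem focResidual_root_le_of_le {b tb ta : ℝ} (hab : a ≤ b) (hc : 0 < c) (ha : 0 ≤ a)
    (hG : Continuous G) (hGlim : Tendsto G atTop (𝓝 1))
    (hgd : ∀ t, 0 < t → HasDerivAt G (g t) t) (hg : ∀ t, 0 < t → 0 ≤ g t)
    (htb : 0 ≤ tb) (hb : focResidual s c b G g tb = 0) (hta : 0 ≤ ta)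
    (huniq : ∀ t, 0 ≤ t → focResidual s c a G g t = 0 → t = ta) : tb ≤ ta := by
  rcases htb.eq_or_lt with rfl | htb
  · exact hta
  have hstart : 0 ≤ focResidual s c a G g tb := by
    have hdiff : focResidual s c a G g tb = focResidual s c b G g tb + (b - a) * g tb := by
      simp only [focResidual]
      ring
    rw [hdiff, hb, zero_add]
    exact mul_nonneg (sub_nonneg.2 hab) (hg tb htb)
  obtain ⟨t, ht, hroot⟩ := exists_ge_eq_zero_of_hasDerivAt
    (fun t ht => hasDerivAt_focResidual_primitive hG (hgd t (htb.trans_le ht))) hstart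
    (focResidual_eventually_neg hc ha hGlim hg)
  exact huniq t (htb.le.trans ht) hroot ▸ ht

theorem focResidual_zero_eq_zero {q : ℝ} (hs : s ≠ 0) (hGq : G q = (s - c) / s) :
    focResidual s c 0 G g q = 0 := by
  simp only [focResidual, hGq, zero_mul, sub_zero]
  field_simp
  ring

theorem focResidual_root_le_centralized {q t : ℝ} (hs : 0 < s) (ha : 0 ≤ a)
    (hg : ∀ t, 0 < t → 0 ≤ g t) (hGmono : StrictMonoOn G (Ici 0)) (hq : 0 ≤ q)
    (hGq : G q = (s - c) / s) (ht : 0 ≤ t) (hroot : focResidual s c a G g t = 0) : t ≤ q := by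
  rcases ht.eq_or_lt with rfl | ht
  · exact hq
  have hGt : G t ≤ G q := by
    have := mul_nonneg ha (hg t ht)
    rw [hGq, le_div_iff₀ hs]
    simp only [focResidual] at hroot
    linarith
  exact (hGmono.le_iff_le ht.le hq).1 hGt

end FocResidual

theorem stmt14_general
    (s w c ξlo ξhi : ℝ) (G g Ginv h KI KII : ℝ → ℝ)
    (hc : 0 < c) (hcw : c < w) (hws : w < s) (hlohi : ξlo ≤ ξhi)
    (hGcont : Continuous G) (hGmono : StrictMonoOn G (Ici 0))
    (hGlim : Tendsto G atTop (nhds 1))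
    (hgd : ∀ t, 0 < t → HasDerivAt G (g t) t) (hgpos : ∀ t, 0 < t → 0 < g t)
    (hGinv : ∀ y ∈ Ico (0:ℝ) 1, 0 ≤ Ginv y ∧ G (Ginv y) = y)
    (hh : ∀ ξ ∈ Icc ξlo ξhi, 0 ≤ h ξ) (hhtop : h ξhi = 0)
    (hKI : ∀ ξ ∈ Icc ξlo ξhi, ξ ≤ KI ξ ∧
      s * (1 - G (KI ξ - ξ)) - c - h ξ * (s - w) * g (KI ξ - ξ) = 0)
    (hKIuniq : ∀ ξ ∈ Icc ξlo ξhi, ∀ κ, ξ ≤ κ →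
      s * (1 - G (κ - ξ)) - c - h ξ * (s - w) * g (κ - ξ) = 0 → κ = KI ξ)
    (hKII : ∀ ξ ∈ Icc ξlo ξhi, ξ ≤ KII ξ ∧
      s * (1 - G (KII ξ - ξ)) - c - h ξ * s * g (KII ξ - ξ) = 0)
    (hKIIuniq : ∀ ξ ∈ Icc ξlo ξhi, ∀ κ, ξ ≤ κ →
      s * (1 - G (κ - ξ)) - c - h ξ * s * g (κ - ξ) = 0 → κ = KII ξ) :
    (∀ ξ ∈ Icc ξlo ξhi, KII ξ ≤ KI ξ ∧ KI ξ ≤ ξ + Ginv ((s - c) / s)) ∧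
    KII ξhi = ξhi + Ginv ((s - c) / s) ∧ KI ξhi = ξhi + Ginv ((s - c) / s) := by
  have hs : 0 < s := by linarith
  obtain ⟨hq, hGq⟩ := hGinv ((s - c) / s)
    ⟨div_nonneg (by linarith) hs.le, (div_lt_one hs).2 (by linarith)⟩
  have hg : ∀ t, 0 < t → 0 ≤ g t := fun t ht => (hgpos t ht).le
  have hsw : 0 ≤ s - w := by linarith
  have rootI : ∀ ξ ∈ Icc ξlo ξhi, ∀ t, 0 ≤ t →
      focResidual s c (h ξ * (s - w)) G g t = 0 → t = KI ξ - ξ := fun ξ hξ t ht hroot => by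
    have := hKIuniq ξ hξ (ξ + t) (by linarith) (by simpa [focResidual] using hroot)
    linarith
  have rootII : ∀ ξ ∈ Icc ξlo ξhi, ∀ t, 0 ≤ t →
      focResidual s c (h ξ * s) G g t = 0 → t = KII ξ - ξ := fun ξ hξ t ht hroot => by
    have := hKIIuniq ξ hξ (ξ + t) (by linarith) (by simpa [focResidual] using hroot)
    linarith
  have hξhi : ξhi ∈ Icc ξlo ξhi := ⟨hlohi, le_rfl⟩
  have hcentral : focResidual s c 0 G g (Ginv ((s - c) / s)) = 0 :=
    focResidual_zero_eq_zero hs.ne' hGq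
  refine ⟨fun ξ hξ => ⟨?_, ?_⟩, ?_, ?_⟩
  · have := focResidual_root_le_of_le (mul_le_mul_of_nonneg_left (by linarith) (hh ξ hξ)) hc
      (mul_nonneg (hh ξ hξ) hsw) hGcont hGlim hgd hg (sub_nonneg.2 (hKII ξ hξ).1) (hKII ξ hξ).2
      (sub_nonneg.2 (hKI ξ hξ).1) (rootI ξ hξ)
    linarith
  · have := focResidual_root_le_centralized hs (mul_nonneg (hh ξ hξ) hsw) hg hGmono hq hGq
      (sub_nonneg.2 (hKI ξ hξ).1) (hKI ξ hξ).2
    linarith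
  · have := rootII ξhi hξhi _ hq (by rwa [hhtop, zero_mul])
    linarith
  · have := rootI ξhi hξhi _ hq (by rwa [hhtop, zero_mul])
    linarith

/-- Ordering of the contract reservation schedules: K_II(ξ) ≤ K_I(ξ) ≤ K_c(ξ) on
[ξ̲, ξ̄], with equality at ξ = ξ̄ where the virtual cost h(ξ̄) = 0. -/
theorem stmt14
    (s w c ξlo ξhi : ℝ) (G g Ginv h KI KII : ℝ → ℝ)
    (hc : 0 < c) (hcw : c < w) (hws : w < s) (hlohi : ξlo ≤ ξhi)
    (hGcont : Continuous G) (hGmono : StrictMonoOn G (Ici 0)) (hG0 : G 0 = 0)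
    (hGlim : Tendsto G atTop (nhds 1))
    (hgd : ∀ t, 0 < t → HasDerivAt G (g t) t) (hgpos : ∀ t, 0 < t → 0 < g t)
    (hGinv : ∀ y ∈ Ico (0:ℝ) 1, 0 ≤ Ginv y ∧ G (Ginv y) = y)
    (hh : ∀ ξ ∈ Icc ξlo ξhi, 0 ≤ h ξ) (hhtop : h ξhi = 0)
    (hKI : ∀ ξ ∈ Icc ξlo ξhi, ξ ≤ KI ξ ∧
      s * (1 - G (KI ξ - ξ)) - c - h ξ * (s - w) * g (KI ξ - ξ) = 0)
    (hKIuniq : ∀ ξ ∈ Icc ξlo ξhi, ∀ κ, ξ ≤ κ →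
      s * (1 - G (κ - ξ)) - c - h ξ * (s - w) * g (κ - ξ) = 0 → κ = KI ξ)
    (hKII : ∀ ξ ∈ Icc ξlo ξhi, ξ ≤ KII ξ ∧
      s * (1 - G (KII ξ - ξ)) - c - h ξ * s * g (KII ξ - ξ) = 0)
    (hKIIuniq : ∀ ξ ∈ Icc ξlo ξhi, ∀ κ, ξ ≤ κ →
      s * (1 - G (κ - ξ)) - c - h ξ * s * g (κ - ξ) = 0 → κ = KII ξ) :
    (∀ ξ ∈ Icc ξlo ξhi, KII ξ ≤ KI ξ ∧ KI ξ ≤ ξ + Ginv ((s - c) / s)) ∧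
    KII ξhi = ξhi + Ginv ((s - c) / s) ∧ KI ξhi = ξhi + Ginv ((s - c) / s) :=
  stmt14_general s w c ξlo ξhi G g Ginv h KI KII hc hcw hws hlohi hGcont hGmono hGlim hgd hgpos
    hGinv hh hhtop hKI hKIuniq hKII hKIIuniq
end

section
/- In the optimal DB-bearing-risk contract, the marginal payment with respect to the reservation satisfies dP*/dK* = (s−w)·(1 − G(K*(ξ)−ξ)) ≥ 0; that is, the optimal payment P* is nondecreasing along the optimal reservation schedule K*. -/
/-!
Since `k ξ ≥ ξ`, the payment is `-Π ξ + (r - w) ξ + (s - w) ∫₀^{k ξ - ξ} (1 - G)`. Differentiating,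
the envelope condition on `Π'` cancels the constant `r - w` and the `G`-part of the chain-rule
term, leaving `(s - w) (1 - G (k ξ - ξ)) k' ξ`, which is nonnegative because `G ≤ 1` and `k' > 0`.
-/

open MeasureTheory Set Filter

section Payment

variable {r s w ξ κ : ℝ} {G k Pi : ℝ → ℝ}

lemma payment_eq_of_le (hk : ξ ≤ k ξ) :
    -Pi ξ + (r - w) * min (k ξ) ξ + (s - w) * ∫ u in (0:ℝ)..(max (k ξ - ξ) 0), (1 - G u) =
      -Pi ξ + (r - w) * ξ + (s - w) * ∫ u in (0:ℝ)..(k ξ - ξ), (1 - G u) := by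
  rw [min_eq_right hk, max_eq_left (sub_nonneg.mpr hk)]

lemma hasDerivAt_payment (hG : Continuous G) (hkd : HasDerivAt k κ ξ)
    (hPid : HasDerivAt Pi ((r - s) + (s - w) * G (k ξ - ξ)) ξ) :
    HasDerivAt (fun x => -Pi x + (r - w) * x + (s - w) * ∫ u in (0:ℝ)..(k x - x), (1 - G u))
      ((s - w) * (1 - G (k ξ - ξ)) * κ) ξ := by
  have hF : HasDerivAt (fun t => ∫ u in (0:ℝ)..t, (1 - G u)) (1 - G (k ξ - ξ)) (k ξ - ξ) :=
    ((continuous_const.sub hG).integral_hasStrictDerivAt 0 _).hasDerivAt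
  have hslack : HasDerivAt (fun x => k x - x) (κ - 1) ξ := hkd.sub (hasDerivAt_id ξ)
  exact ((hPid.neg.add ((hasDerivAt_id ξ).const_mul (r - w))).add
    ((hF.comp (h := fun x => k x - x) ξ hslack).const_mul (s - w))).congr_deriv (by ring)

end Payment

theorem stmt15_general
    (r s w ξlo ξhi : ℝ) (G : ℝ → ℝ) (k k' p Pi : ℝ → ℝ)
    (hws : w < s)
    (hGcont : Continuous G)
    (hG1 : ∀ t, G t ≤ 1)
    (hkd : ∀ ξ, HasDerivAt k (k' ξ) ξ) (hk'pos : ∀ ξ, 0 < k' ξ)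
    (hk : ∀ ξ, ξ ≤ k ξ)
    (hPid : ∀ ξ, HasDerivAt Pi ((r - s) + (s - w) * G (k ξ - ξ)) ξ)
    (hp : ∀ ξ, p ξ = -Pi ξ + (r - w) * min (k ξ) ξ +
      (s - w) * ∫ u in (0:ℝ)..(max (k ξ - ξ) 0), (1 - G u)) :
    (∀ ξ ∈ Icc ξlo ξhi,
      HasDerivAt p ((s - w) * (1 - G (k ξ - ξ)) * k' ξ) ξ ∧
      0 ≤ (s - w) * (1 - G (k ξ - ξ))) ∧
    MonotoneOn p (Icc ξlo ξhi) := by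
  have hpeq : p = fun x => -Pi x + (r - w) * x + (s - w) * ∫ u in (0:ℝ)..(k x - x), (1 - G u) :=
    funext fun x => (hp x).trans (payment_eq_of_le (hk x))
  have hderiv : ∀ ξ, HasDerivAt p ((s - w) * (1 - G (k ξ - ξ)) * k' ξ) ξ := fun ξ =>
    hpeq ▸ hasDerivAt_payment hGcont (hkd ξ) (hPid ξ)
  have hrate : ∀ ξ, 0 ≤ (s - w) * (1 - G (k ξ - ξ)) := fun ξ =>
    mul_nonneg (sub_nonneg.mpr hws.le) (sub_nonneg.mpr (hG1 _))
  refine ⟨fun ξ _ => ⟨hderiv ξ, hrate ξ⟩, ?_⟩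
  exact (monotone_of_hasDerivAt_nonneg hderiv
    fun ξ => mul_nonneg (hrate ξ) (hk'pos ξ).le).monotoneOn _

/-- Optimal DB-bearing-risk contract: dP*/dK* = (s−w)(1 − G(K*(ξ)−ξ)) ≥ 0 along the
optimal schedule, so the payment is nondecreasing. -/
theorem stmt15
    (r s w ξlo ξhi : ℝ) (G : ℝ → ℝ) (k k' p Pi : ℝ → ℝ)
    (hw : 0 < w) (hws : w < s) (hsr : s < r) (hlohi : ξlo ≤ ξhi)
    (hGcont : Continuous G) (hGmono : Monotone G) (hG0 : G 0 = 0)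
    (hG1 : ∀ t, G t ≤ 1)
    (hkd : ∀ ξ, HasDerivAt k (k' ξ) ξ) (hk'pos : ∀ ξ, 0 < k' ξ)
    (hk : ∀ ξ, ξ ≤ k ξ)
    (hPid : ∀ ξ, HasDerivAt Pi ((r - s) + (s - w) * G (k ξ - ξ)) ξ)
    (hp : ∀ ξ, p ξ = -Pi ξ + (r - w) * min (k ξ) ξ +
      (s - w) * ∫ u in (0:ℝ)..(max (k ξ - ξ) 0), (1 - G u)) :
    (∀ ξ ∈ Icc ξlo ξhi,
      HasDerivAt p ((s - w) * (1 - G (k ξ - ξ)) * k' ξ) ξ ∧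
      0 ≤ (s - w) * (1 - G (k ξ - ξ))) ∧
    MonotoneOn p (Icc ξlo ξhi) :=
  stmt15_general r s w ξlo ξhi G k k' p Pi hws hGcont hG1 hkd hk'pos hk hPid hp
end
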